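/- arXiv:1906.07403 — 5 statements merged into one kernel-verified Lean document; each statement's English description precedes it below -/
import Mathlib

section
/- Let H ∈ ℂ^{n×n} be Hermitian and let Π_1,…,Π_d be orthogonal projections with Π_k Π_{k'} = 0 for k ≠ k' and Σ_k Π_k = I. Suppose {1,…,d} = I ∪ J with I, J nonempty and disjoint, and suppose Δ_{k,k'} = tr(Π_k D_H(Π_{k'})) = 0 for all k ∈ I and k' ∈ J (i.e., the graph associated to the Laplacian Δ is disconnected along this partition). Then, setting Π_I = Σ_{k∈I} Π_k and Π_J = Σ_{k∈J} Π_k, the Hamiltonian is block diagonal: H = Π_I H Π_I + Π_J H Π_J. -/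
/-!
For `k ≠ k'` the anticommutator part of `D_H(Π_{k'})` is annihilated by `Π_k` under the trace,
so `Δ_{k,k'} = tr(Π_k H Π_{k'} H) = ‖Π_k H Π_{k'}‖²` (Frobenius norm). A vanishing Laplacian
entry therefore kills the block `Π_k H Π_{k'}`, hence all blocks between `I` and `J`, and
`H = (Π_I + Π_J) H (Π_I + Π_J)` collapses to its diagonal blocks.
-/

open Matrix Finset

/-- The dissipation superoperator `D_A(ρ) = AρA† − ½(A†Aρ + ρA†A)`. -/
noncomputable def Dsup {n : ℕ} (A ρ : Matrix (Fin n) (Fin n) ℂ) : Matrix (Fin n) (Fin n) ℂ :=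
  A * ρ * Aᴴ - (1 / 2 : ℂ) • (Aᴴ * A * ρ + ρ * Aᴴ * A)

open scoped ComplexOrder

theorem trace_mul_Dsup_of_mul_eq_zero {n : ℕ} (A P Q : Matrix (Fin n) (Fin n) ℂ)
    (hPQ : P * Q = 0) (hQP : Q * P = 0) :
    (P * Dsup A Q).trace = (P * A * Q * Aᴴ).trace := by
  have hleft : (P * (Aᴴ * A * Q)).trace = 0 := by
    rw [← Matrix.mul_assoc, trace_mul_comm, ← Matrix.mul_assoc, ← Matrix.mul_assoc, hQP,
      Matrix.zero_mul, Matrix.zero_mul, trace_zero]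
  have hright : (P * (Q * Aᴴ * A)).trace = 0 := by
    rw [Matrix.mul_assoc, ← Matrix.mul_assoc, hPQ, Matrix.zero_mul, trace_zero]
  rw [Dsup, Matrix.mul_sub, Matrix.mul_smul, Matrix.mul_add, trace_sub, trace_smul, trace_add,
    hleft, hright, add_zero, smul_zero, sub_zero, Matrix.mul_assoc, Matrix.mul_assoc,
    Matrix.mul_assoc]

theorem Matrix.mul_mul_eq_zero_of_trace_mul_conjTranspose_eq_zero {m : Type*} [Fintype m]
    {P Q A : Matrix m m ℂ} (hP : IsStarProjection P) (hQ : IsStarProjection Q)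
    (h : (P * A * Q * Aᴴ).trace = 0) : P * A * Q = 0 := by
  rw [← trace_mul_conjTranspose_self_eq_zero_iff]
  have hPh : Pᴴ = P := hP.isSelfAdjoint
  have hQh : Qᴴ = Q := hQ.isSelfAdjoint
  have hself : (P * A * Q) * (P * A * Q)ᴴ = P * (A * Q * Aᴴ * P) := by
    simp only [conjTranspose_mul, hPh, hQh]
    calc P * A * Q * (Q * (Aᴴ * P)) = P * A * (Q * Q) * Aᴴ * P := by noncomm_ring
      _ = P * (A * Q * Aᴴ * P) := by rw [hQ.isIdempotentElem.eq]; noncomm_ring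
  rw [hself, trace_mul_comm, Matrix.mul_assoc, hP.isIdempotentElem.eq, trace_mul_comm,
    ← h]
  noncomm_ring

theorem Finset.sum_mul_mul_sum_eq_zero {ι R : Type*} [NonUnitalSemiring R] {s t : Finset ι}
    {f : ι → R} {a : R} (h : ∀ i ∈ s, ∀ j ∈ t, f i * a * f j = 0) :
    (∑ i ∈ s, f i) * a * ∑ j ∈ t, f j = 0 := by
  rw [Finset.sum_mul, Finset.sum_mul_sum]
  exact sum_eq_zero fun i hi => sum_eq_zero fun j hj => h i hi j hj

theorem eq_add_of_add_eq_one_of_mul_mul_eq_zero {R : Type*} [Ring R] {p q a : R}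
    (hpq : p + q = 1) (hpaq : p * a * q = 0) (hqap : q * a * p = 0) :
    a = p * a * p + q * a * q :=
  calc a = (p + q) * a * (p + q) := by rw [hpq, one_mul, mul_one]
    _ = p * a * p + q * a * q + p * a * q + q * a * p := by noncomm_ring
    _ = p * a * p + q * a * q := by rw [hpaq, hqap, add_zero, add_zero]

theorem stmt8_general {n d : ℕ} (H : Matrix (Fin n) (Fin n) ℂ) (hH : Hᴴ = H)
    (Proj : Fin d → Matrix (Fin n) (Fin n) ℂ)
    (hherm : ∀ k, (Proj k)ᴴ = Proj k)
    (hidem : ∀ k, Proj k * Proj k = Proj k)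
    (horth : ∀ k k', k ≠ k' → Proj k * Proj k' = 0)
    (hres : ∑ k, Proj k = 1)
    (I J : Finset (Fin d))
    (hdisj : Disjoint I J) (hcover : I ∪ J = Finset.univ)
    (hzero : ∀ k ∈ I, ∀ k' ∈ J, (Proj k * Dsup H (Proj k')).trace = 0) :
    H = (∑ k ∈ I, Proj k) * H * (∑ k ∈ I, Proj k)
        + (∑ k ∈ J, Proj k) * H * (∑ k ∈ J, Proj k) := by
  have hcross : ∀ k ∈ I, ∀ k' ∈ J, Proj k * H * Proj k' = 0 := fun k hk k' hk' => by
    have hne : k ≠ k' := disjoint_iff_ne.mp hdisj k hk k' hk'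
    refine mul_mul_eq_zero_of_trace_mul_conjTranspose_eq_zero ⟨hidem k, hherm k⟩
      ⟨hidem k', hherm k'⟩ ?_
    rw [← trace_mul_Dsup_of_mul_eq_zero H _ _ (horth k k' hne) (horth k' k hne.symm)]
    exact hzero k hk k' hk'
  have hcross' : ∀ k' ∈ J, ∀ k ∈ I, Proj k' * H * Proj k = 0 := fun k' hk' k hk => by
    simpa only [conjTranspose_mul, hherm, hH, conjTranspose_zero, Matrix.mul_assoc]
      using congrArg conjTranspose (hcross k hk k' hk')
  refine eq_add_of_add_eq_one_of_mul_mul_eq_zero ?_ (sum_mul_mul_sum_eq_zero hcross)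
    (sum_mul_mul_sum_eq_zero hcross')
  rw [← sum_union hdisj, hcover, hres]

/-- If the index set `{1,…,d}` splits into two nonempty disjoint parts `I, J`
such that all Laplacian entries `Δ_{k,k'} = tr(Π_k D_H(Π_{k'}))` vanish for `k ∈ I`, `k' ∈ J`
(disconnected Laplacian graph), then the Hermitian Hamiltonian `H` is block diagonal with
respect to `Π_I = Σ_{k∈I} Π_k` and `Π_J = Σ_{k∈J} Π_k`:
`H = Π_I H Π_I + Π_J H Π_J`. -/
theorem stmt8 {n d : ℕ} (H : Matrix (Fin n) (Fin n) ℂ) (hH : Hᴴ = H)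
    (Proj : Fin d → Matrix (Fin n) (Fin n) ℂ)
    (hherm : ∀ k, (Proj k)ᴴ = Proj k)
    (hidem : ∀ k, Proj k * Proj k = Proj k)
    (horth : ∀ k k', k ≠ k' → Proj k * Proj k' = 0)
    (hres : ∑ k, Proj k = 1)
    (I J : Finset (Fin d)) (hI : I.Nonempty) (hJ : J.Nonempty)
    (hdisj : Disjoint I J) (hcover : I ∪ J = Finset.univ)
    (hzero : ∀ k ∈ I, ∀ k' ∈ J, (Proj k * Dsup H (Proj k')).trace = 0) :
    H = (∑ k ∈ I, Proj k) * H * (∑ k ∈ I, Proj k)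
        + (∑ k ∈ J, Proj k) * H * (∑ k ∈ J, Proj k) :=
  stmt8_general H hH Proj hherm hidem horth hres I J hdisj hcover hzero
end

section
/- Let Δ be a d×d real symmetric Laplacian matrix (nonnegative off-diagonal entries, zero row sums) whose associated graph is connected, and fix ℓ ∈ {1,…,d}. Let β ∈ ℝ^d satisfy β_k > 0 for all k ≠ ℓ and β_ℓ = − Σ_{k≠ℓ} β_k. Then there exists a unique α ∈ ℝ^d such that Δα = −β and α_ℓ = 0; moreover this solution satisfies α_k > 0 for all k ≠ ℓ. -/
/-!
Since the rows of `Δ` sum to zero, `(Δ γ)_k = ∑_{k'} Δ_{k k'} (γ_{k'} - γ_k)`, and at a minimum of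
`γ` every term of this sum is nonnegative. Hence a solution of `Δ α = -β` attains its minimum only
at `ℓ`, where it vanishes, which gives `α_k > 0` for `k ≠ ℓ`. For `Δ γ = 0` the terms at a minimum
all vanish, so the minimum spreads along the edges of the connected graph: the kernel of `Δ` consists
of the constants. By symmetry the range of `Δ` lies in the hyperplane `∑_k x_k = 0`, and comparing
dimensions it is that hyperplane, which contains `-β`. The normalisation `α_ℓ = 0` then fixes the
additive constant.
-/

open Matrix Finset

namespace Matrix

variable {ι : Type*} {Δ : Matrix ι ι ℝ}

def posGraph (Δ : Matrix ι ι ℝ) : SimpleGraph ι :=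
  SimpleGraph.fromRel fun k k' => 0 < Δ k k'

theorem mul_sub_nonneg_of_forall_le (hoff : ∀ k k', k ≠ k' → 0 ≤ Δ k k') {γ : ι → ℝ} {k : ι}
    (hmin : ∀ k', γ k ≤ γ k') (k' : ι) : 0 ≤ Δ k k' * (γ k' - γ k) := by
  rcases eq_or_ne k k' with rfl | hne
  · simp
  · exact mul_nonneg (hoff k k' hne) (sub_nonneg.2 (hmin k'))

variable [Fintype ι]

structure IsLaplacian (Δ : Matrix ι ι ℝ) : Prop where
  isSymm : Δ.IsSymm
  nonneg_of_ne : ∀ k k', k ≠ k' → 0 ≤ Δ k k'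
  sum_row_eq_zero : ∀ k, ∑ k', Δ k k' = 0

theorem mulVec_apply_eq_sum_mul_sub (hrow : ∀ k, ∑ k', Δ k k' = 0) (γ : ι → ℝ) (k : ι) :
    (Δ *ᵥ γ) k = ∑ k', Δ k k' * (γ k' - γ k) := by
  simp only [mul_sub, sum_sub_distrib, ← sum_mul, hrow k, zero_mul, sub_zero]
  rfl

theorem mulVec_const_eq_zero (hrow : ∀ k, ∑ k', Δ k k' = 0) (c : ℝ) :
    Δ *ᵥ (fun _ => c) = 0 := by
  ext k
  simp [mulVec_apply_eq_sum_mul_sub hrow]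

theorem mulVec_apply_nonneg_of_forall_le (hoff : ∀ k k', k ≠ k' → 0 ≤ Δ k k')
    (hrow : ∀ k, ∑ k', Δ k k' = 0) {γ : ι → ℝ} {k : ι} (hmin : ∀ k', γ k ≤ γ k') :
    0 ≤ (Δ *ᵥ γ) k := by
  rw [mulVec_apply_eq_sum_mul_sub hrow]
  exact sum_nonneg fun k' _ => mul_sub_nonneg_of_forall_le hoff hmin k'

theorem apply_eq_of_mulVec_apply_eq_zero_of_forall_le (hoff : ∀ k k', k ≠ k' → 0 ≤ Δ k k')
    (hrow : ∀ k, ∑ k', Δ k k' = 0) {γ : ι → ℝ} {k k' : ι} (hmin : ∀ k', γ k ≤ γ k')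
    (hγ : (Δ *ᵥ γ) k = 0) (hΔ : 0 < Δ k k') : γ k' = γ k := by
  rw [mulVec_apply_eq_sum_mul_sub hrow] at hγ
  have hterm := (sum_eq_zero_iff_of_nonneg fun k' _ => mul_sub_nonneg_of_forall_le hoff hmin k').1
    hγ k' (mem_univ k')
  exact sub_eq_zero.1 ((mul_eq_zero.1 hterm).resolve_left hΔ.ne')

theorem pos_of_mulVec_eq_neg (hoff : ∀ k k', k ≠ k' → 0 ≤ Δ k k')
    (hrow : ∀ k, ∑ k', Δ k k' = 0) {ℓ : ι} {α β : ι → ℝ} (hβ : ∀ k, k ≠ ℓ → 0 < β k)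
    (hα : Δ *ᵥ α = -β) (hαℓ : α ℓ = 0) (k : ι) (hk : k ≠ ℓ) : 0 < α k := by
  have hmin_only_at : ∀ m, (∀ k', α m ≤ α k') → m = ℓ := by
    intro m hm
    by_contra hmℓ
    have hnonneg := mulVec_apply_nonneg_of_forall_le hoff hrow hm
    rw [hα, Pi.neg_apply] at hnonneg
    linarith [hβ m hmℓ]
  have : Nonempty ι := ⟨k⟩
  obtain ⟨m, hm⟩ := Finite.exists_min α
  obtain rfl : m = ℓ := hmin_only_at m hm
  refine lt_of_le_of_ne (hαℓ ▸ hm k) fun hk0 => hk (hmin_only_at k fun k' => ?_)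
  rw [← hk0, ← hαℓ]
  exact hm k'

namespace IsLaplacian

theorem apply_eq_of_mulVec_eq_zero (hΔ : Δ.IsLaplacian) (hconn : Δ.posGraph.Connected)
    {γ : ι → ℝ} (hγ : Δ *ᵥ γ = 0) (a b : ι) : γ a = γ b := by
  have : Nonempty ι := ⟨a⟩
  obtain ⟨m, hm⟩ := Finite.exists_min γ
  have hmin_eq : ∀ c, γ c = γ m := by
    intro c
    induction (SimpleGraph.reachable_iff_reflTransGen m c).1 (hconn m c) with
    | refl => rfl
    | @tail x y _ hadj ih =>
      obtain ⟨-, hxy⟩ := (SimpleGraph.fromRel_adj _ x y).1 hadj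
      have hpos : 0 < Δ x y := hxy.elim id fun h => hΔ.isSymm.apply x y ▸ h
      rw [apply_eq_of_mulVec_apply_eq_zero_of_forall_le hΔ.nonneg_of_ne hΔ.sum_row_eq_zero
        (ih ▸ hm) (congrFun hγ x) hpos, ih]
  rw [hmin_eq a, hmin_eq b]

theorem eq_of_mulVec_eq_of_apply_eq (hΔ : Δ.IsLaplacian) (hconn : Δ.posGraph.Connected)
    {x y : ι → ℝ} (h : Δ *ᵥ x = Δ *ᵥ y) {ℓ : ι} (hℓ : x ℓ = y ℓ) : x = y := by
  funext k
  have hdiff := hΔ.apply_eq_of_mulVec_eq_zero hconn (γ := x - y)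
    (by rw [mulVec_sub, h, sub_self]) k ℓ
  simp only [Pi.sub_apply] at hdiff
  linarith

theorem sum_mulVec_eq_zero (hΔ : Δ.IsLaplacian) (x : ι → ℝ) : ∑ k, (Δ *ᵥ x) k = 0 := by
  rw [← one_dotProduct, dotProduct_mulVec, ← hΔ.isSymm.eq, vecMul_transpose]
  show Δ *ᵥ (fun _ => 1) ⬝ᵥ x = 0
  rw [mulVec_const_eq_zero hΔ.sum_row_eq_zero, zero_dotProduct]

theorem range_mulVecLin_eq_ker_dotProduct_one [Nonempty ι] (hΔ : Δ.IsLaplacian)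
    (hconn : Δ.posGraph.Connected) :
    LinearMap.range Δ.mulVecLin = LinearMap.ker (dotProductBilin ℝ ℝ (1 : ι → ℝ)) := by
  have hker : LinearMap.ker Δ.mulVecLin ≤ ℝ ∙ (1 : ι → ℝ) := by
    intro γ hγ
    obtain ⟨k⟩ := ‹Nonempty ι›
    refine Submodule.mem_span_singleton.2 ⟨γ k, funext fun j => ?_⟩
    simp [hΔ.apply_eq_of_mulVec_eq_zero hconn hγ j k]
  have hle : LinearMap.range Δ.mulVecLin ≤ LinearMap.ker (dotProductBilin ℝ ℝ (1 : ι → ℝ)) := by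
    rintro - ⟨x, rfl⟩
    simp [one_dotProduct, hΔ.sum_mulVec_eq_zero]
  have hproper : LinearMap.ker (dotProductBilin ℝ ℝ (1 : ι → ℝ)) ≠ ⊤ := by
    intro h
    have h1 : (1 : ι → ℝ) ∈ LinearMap.ker (dotProductBilin ℝ ℝ (1 : ι → ℝ)) :=
      h ▸ Submodule.mem_top
    simp [one_dotProduct_one] at h1
  refine Submodule.eq_of_le_of_finrank_le hle ?_
  have hrank := LinearMap.finrank_range_add_finrank_ker Δ.mulVecLin
  have hker_rank := (Submodule.finrank_mono hker).trans_eq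
    (finrank_span_singleton (one_ne_zero : (1 : ι → ℝ) ≠ 0))
  have hhyperplane_rank := Submodule.finrank_lt hproper
  omega

theorem exists_mulVec_eq_of_sum_eq_zero (hΔ : Δ.IsLaplacian) (hconn : Δ.posGraph.Connected)
    [Nonempty ι] {b : ι → ℝ} (hb : ∑ k, b k = 0) : ∃ x, Δ *ᵥ x = b := by
  have hb' : b ∈ LinearMap.range Δ.mulVecLin := by
    rw [hΔ.range_mulVecLin_eq_ker_dotProduct_one hconn]
    simpa [one_dotProduct] using hb
  exact LinearMap.mem_range.1 hb'

end IsLaplacian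

end Matrix

/-- Let `Δ` be a `d × d` real symmetric Laplacian matrix (nonnegative
off-diagonal entries, zero row sums) with connected associated graph, fix `ℓ`, and let
`β ∈ ℝ^d` have `β_k > 0` for `k ≠ ℓ` and `β_ℓ = −Σ_{k≠ℓ} β_k`. Then there exists a unique
`α` with `Δα = −β` and `α_ℓ = 0`, and this solution satisfies `α_k > 0` for all `k ≠ ℓ`. -/
theorem stmt10 {d : ℕ} (Δ : Matrix (Fin d) (Fin d) ℝ)
    (hsymm : Δ.IsSymm)
    (hoff : ∀ k k', k ≠ k' → 0 ≤ Δ k k')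
    (hrow : ∀ k, ∑ k', Δ k k' = 0)
    (hconn : (SimpleGraph.fromRel (fun k k' => 0 < Δ k k')).Connected)
    (ℓ : Fin d) (β : Fin d → ℝ)
    (hβpos : ∀ k, k ≠ ℓ → 0 < β k)
    (hβℓ : β ℓ = -∑ k ∈ Finset.univ.erase ℓ, β k) :
    (∃! α : Fin d → ℝ, Δ.mulVec α = -β ∧ α ℓ = 0) ∧
      ∀ α : Fin d → ℝ, (Δ.mulVec α = -β ∧ α ℓ = 0) → ∀ k, k ≠ ℓ → 0 < α k := by
  have hsum : ∑ k, (-β) k = 0 := by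
    rw [← add_sum_erase univ _ (mem_univ ℓ), Pi.neg_apply, hβℓ]
    simp
  have hΔ : Δ.IsLaplacian := ⟨hsymm, hoff, hrow⟩
  have : Nonempty (Fin d) := ⟨ℓ⟩
  obtain ⟨α₀, hα₀⟩ := hΔ.exists_mulVec_eq_of_sum_eq_zero hconn hsum
  have hsol : Δ *ᵥ (α₀ - fun _ => α₀ ℓ) = -β := by
    rw [mulVec_sub, mulVec_const_eq_zero hrow, sub_zero, hα₀]
  refine ⟨⟨α₀ - fun _ => α₀ ℓ, ⟨hsol, sub_self _⟩, fun α hα => ?_⟩,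
    fun α hα => pos_of_mulVec_eq_neg hoff hrow hβpos hα.1 hα.2⟩
  exact hΔ.eq_of_mulVec_eq_of_apply_eq hconn (hα.1.trans hsol.symm)
    (hα.2.trans (sub_self _).symm)
end

section
/- Let L = Σ_{k=1}^d λ_k Π_k be a Hermitian matrix with distinct eigenvalues and orthogonal spectral projections resolving the identity, H Hermitian, and suppose the graph of the Laplacian Δ_{k,k'} = tr(Π_k D_H(Π_{k'})) is connected. Fix ℓ and let α_s (s ≠ ℓ) be the solutions of Δα_s = −β_s with α_{s,ℓ} = 0, α_{s,k} > 0 for k ≠ ℓ, where β_{s,k} > 0 for k ≠ ℓ and β_{s,ℓ} = −Σ_{k≠ℓ}β_{s,k}. Then there exist ε_f > 0 and p̄ ∈ (1/2, 1) such that for every density matrix ρ with max_{j≠ℓ} tr(ρΠ_j) ≥ p̄, one has f_α(ρ) ≤ −ε_f · V_α(ρ), where f_α(ρ) = Σ_{s≠ℓ} (Σ_k α_{s,k} tr(Π_k D_H(ρ)))/√(Σ_k α_{s,k} p_k(ρ)) and V_α(ρ) = Σ_{s≠ℓ} √(Σ_k α_{s,k} p_k(ρ)). -/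
/-!
At a spectral projection `Π_j` with `j ≠ ℓ` one has `V_{α_s}(Π_j) = α_{s,j} > 0`, and, `Δ` being
symmetric (because `H` is Hermitian), the numerator of the `s`-th term of `f_α(Π_j)` is
`(Δ α_s)_j = -β_{s,j} < 0`. So `f_α + ε V_α` is continuous and negative at `Π_j` for small `ε`,
hence negative on a neighbourhood of `Π_j`. Since a density matrix has purity `tr ρ² ≤ 1`, every
entry of `ρ - Π_j` is bounded by `√(2 (1 - tr(ρ Π_j)))`, so a population `tr(ρ Π_j)` close to `1`
forces `ρ` into that neighbourhood. There are finitely many `j`, so `ε` and `p̄` can be chosen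
uniformly.
-/

open Matrix Finset ComplexOrder

open Filter Topology

lemma exists_pos_eventually_sum_div_sqrt_le {X ι : Type*} [TopologicalSpace X] [Fintype ι]
    {N V : ι → X → ℝ} {x₀ : X} (hN : ∀ s, ContinuousAt (N s) x₀) (hV : ∀ s, ContinuousAt (V s) x₀)
    (hV₀ : ∀ s, 0 < V s x₀) (hneg : ∑ s, N s x₀ / √(V s x₀) < 0) :
    ∃ ε > 0, ∀ᶠ x in 𝓝 x₀, ∑ s, N s x / √(V s x) ≤ -ε * ∑ s, √(V s x) := by
  set C := ∑ s, √(V s x₀)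
  have hC : 0 ≤ C := sum_nonneg fun s _ => Real.sqrt_nonneg _
  set ε := -(∑ s, N s x₀ / √(V s x₀)) / (2 * (C + 1))
  have hε : 0 < ε := div_pos (neg_pos.mpr hneg) (by positivity)
  have hεC : ε * C < -(∑ s, N s x₀ / √(V s x₀)) := by
    rw [div_mul_eq_mul_div, div_lt_iff₀ (by positivity)]
    nlinarith
  have hcont : ContinuousAt (fun x => ∑ s, N s x / √(V s x) + ε * ∑ s, √(V s x)) x₀ := by
    have hsqrt : ∀ s, √(V s x₀) ≠ 0 := fun s => (Real.sqrt_pos.mpr (hV₀ s)).ne'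
    fun_prop (disch := exact hsqrt _)
  refine ⟨ε, hε, ?_⟩
  filter_upwards [hcont.eventually (gt_mem_nhds (show _ < (0 : ℝ) by linarith))] with x hx
  linarith

lemma exists_forall_of_eventually_nhdsGT_prod_nhdsLT {ι : Type*} [Finite ι] {a : ℝ} (ha : a < 1)
    {P : ι → ℝ × ℝ → Prop} (h : ∀ i, ∀ᶠ q in 𝓝[>] (0 : ℝ) ×ˢ 𝓝[<] (1 : ℝ), P i q) :
    ∃ ε > 0, ∃ p ∈ Set.Ioo a 1, ∀ i, P i (ε, p) := by
  obtain ⟨⟨ε, p⟩, ⟨hε, hp⟩, hP⟩ :=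
    ((eventually_mem_nhdsWithin.prod_mk (Ioo_mem_nhdsLT ha)).and (eventually_all.mpr h)).exists
  exact ⟨ε, hε, p, hp, hP⟩

namespace Matrix

variable {m : Type*} [Fintype m]

lemma PosSemidef.re_trace_mul_self_le_sq {ρ : Matrix m m ℂ} (hρ : ρ.PosSemidef) :
    (ρ * ρ).trace.re ≤ ρ.trace.re ^ 2 := by
  classical
  set e := hρ.1.eigenvalues
  have hsq : ρ * ρ = Unitary.conjStarAlgAut ℂ _ hρ.1.eigenvectorUnitary
      (diagonal (RCLike.ofReal ∘ e) * diagonal (RCLike.ofReal ∘ e)) := by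
    rw [map_mul, ← hρ.1.spectral_theorem]
  have htr : (ρ * ρ).trace.re = ∑ i, e i ^ 2 := by
    rw [hsq, Unitary.conjStarAlgAut_apply, trace_mul_cycle, Unitary.coe_star_mul_self, one_mul,
      diagonal_mul_diagonal, trace_diagonal]
    simp [sq]
  rw [htr, hρ.1.trace_eq_sum_eigenvalues]
  simpa using sum_sq_le_sq_sum_of_nonneg fun i _ => hρ.eigenvalues_nonneg i

section SupNorm

attribute [local instance] Matrix.normedAddCommGroup

lemma norm_sq_le_re_trace_mul_conjTranspose (M : Matrix m m ℂ) :
    ‖M‖ ^ 2 ≤ (M * Mᴴ).trace.re := by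
  have hsum : (M * Mᴴ).trace.re = ∑ i, ∑ j, ‖M i j‖ ^ 2 := by
    simp [trace, mul_apply, Complex.mul_conj, Complex.normSq_eq_norm_sq, -Complex.ofReal_pow]
  rw [hsum, ← Real.le_sqrt (norm_nonneg _) (by positivity), norm_le_iff (Real.sqrt_nonneg _)]
  intro i j
  refine Real.le_sqrt_of_sq_le ?_
  calc ‖M i j‖ ^ 2 ≤ ∑ j', ‖M i j'‖ ^ 2 :=
      single_le_sum (f := fun j' => ‖M i j'‖ ^ 2) (fun _ _ => by positivity) (mem_univ j)
    _ ≤ ∑ i', ∑ j', ‖M i' j'‖ ^ 2 :=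
      single_le_sum (f := fun i' => ∑ j', ‖M i' j'‖ ^ 2) (fun _ _ => by positivity) (mem_univ i)

lemma norm_sub_sq_le_of_isIdempotent {ρ Q : Matrix m m ℂ} (hρ : ρ.PosSemidef)
    (hρ1 : ρ.trace = 1) (hQh : Qᴴ = Q) (hQi : Q * Q = Q) (hQ1 : Q.trace = 1) :
    ‖ρ - Q‖ ^ 2 ≤ 2 * (1 - (ρ * Q).trace.re) := by
  have hexp : (ρ - Q) * (ρ - Q)ᴴ = ρ * ρ - ρ * Q - Q * ρ + Q * Q := by
    rw [conjTranspose_sub, hρ.1.eq, hQh]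
    noncomm_ring
  have hpure := hρ.re_trace_mul_self_le_sq
  refine (norm_sq_le_re_trace_mul_conjTranspose _).trans ?_
  rw [hexp, hQi, trace_add, trace_sub, trace_sub, trace_mul_comm Q ρ, hQ1]
  rw [hρ1] at hpure
  simp only [Complex.add_re, Complex.sub_re, Complex.one_re] at hpure ⊢
  linarith

lemma eventually_forall_mem_of_le_re_trace_mul {Q : Matrix m m ℂ} (hQh : Qᴴ = Q)
    (hQi : Q * Q = Q) (hQ1 : Q.trace = 1) {U : Set (Matrix m m ℂ)} (hU : U ∈ 𝓝 Q) :
    ∀ᶠ p in 𝓝[<] (1 : ℝ), ∀ ρ : Matrix m m ℂ, ρ.PosSemidef → ρ.trace = 1 →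
      p ≤ (ρ * Q).trace.re → ρ ∈ U := by
  obtain ⟨δ, hδ, hball⟩ := Metric.mem_nhds_iff.mp hU
  filter_upwards [Ioo_mem_nhdsLT (show 1 - δ ^ 2 / 2 < 1 by nlinarith)] with
    p hp ρ hρ hρ1 hpρ
  have hsq := norm_sub_sq_le_of_isIdempotent hρ hρ1 hQh hQi hQ1
  refine hball (mem_ball_iff_norm.mpr ?_)
  exact (pow_lt_pow_iff_left₀ (norm_nonneg _) hδ.le two_ne_zero).mp (by linarith [hp.1])

end SupNorm

lemma eventually_le_neg_mul_of_le_re_trace_mul {Q : Matrix m m ℂ} (hQh : Qᴴ = Q)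
    (hQi : Q * Q = Q) (hQ1 : Q.trace = 1) {F V : Matrix m m ℂ → ℝ} (hV : ∀ ρ, 0 ≤ V ρ)
    {ε₀ : ℝ} (hε₀ : 0 < ε₀) (h : ∀ᶠ ρ in 𝓝 Q, F ρ ≤ -ε₀ * V ρ) :
    ∀ᶠ q : ℝ × ℝ in 𝓝[>] 0 ×ˢ 𝓝[<] 1, ∀ ρ : Matrix m m ℂ, ρ.PosSemidef → ρ.trace = 1 →
      q.2 ≤ (ρ * Q).trace.re → F ρ ≤ -q.1 * V ρ := by
  filter_upwards [prod_mem_prod (Ioc_mem_nhdsGT hε₀)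
    (eventually_forall_mem_of_le_re_trace_mul hQh hQi hQ1 h)] with ⟨ε, p⟩ ⟨hε, hp⟩ ρ hρ hρ1 hpρ
  calc F ρ ≤ -ε₀ * V ρ := hp ρ hρ hρ1 hpρ
    _ ≤ -ε * V ρ := by have := hV ρ; nlinarith [hε.2]

end Matrix

lemma trace_mul_Dsup_comm {n : ℕ} {H : Matrix (Fin n) (Fin n) ℂ} (hH : Hᴴ = H)
    (P Q : Matrix (Fin n) (Fin n) ℂ) : (Q * Dsup H P).trace = (P * Dsup H Q).trace := by
  simp only [Dsup, hH, mul_sub, mul_add, mul_smul_comm, trace_sub, trace_add, trace_smul,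
    ← mul_assoc]
  have hHPH : (Q * H * P * H).trace = (P * H * Q * H).trace := by
    rw [mul_assoc (Q * H), trace_mul_comm, ← mul_assoc]
  have hHHP : (Q * H * H * P).trace = (P * Q * H * H).trace := by
    rw [trace_mul_comm, ← mul_assoc, ← mul_assoc]
  have hPHH : (Q * P * H * H).trace = (P * H * H * Q).trace := by
    rw [mul_assoc Q, mul_assoc Q, trace_mul_comm, mul_assoc]
  rw [hHPH, hHHP, hPHH, add_comm]

section SpectralProjections

variable {ι σ : Type*} {n : ℕ} {Proj : ι → Matrix (Fin n) (Fin n) ℂ}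
  {H : Matrix (Fin n) (Fin n) ℂ} {Δ : Matrix ι ι ℝ}

lemma isSymm_of_eq_trace_mul_Dsup (hH : Hᴴ = H)
    (hΔ : ∀ k k', (Δ k k' : ℂ) = (Proj k * Dsup H (Proj k')).trace) : Δ.IsSymm :=
  IsSymm.ext fun k k' => by
    exact_mod_cast (hΔ k' k).trans ((trace_mul_Dsup_comm hH _ _).trans (hΔ k k').symm)

variable [Fintype ι]

lemma sum_mul_re_trace_mul_proj (hidem : ∀ k, Proj k * Proj k = Proj k)
    (horth : ∀ k k', k ≠ k' → Proj k * Proj k' = 0) (hrank1 : ∀ k, (Proj k).trace = 1)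
    (a : ι → ℝ) (j : ι) : ∑ k, a k * (Proj j * Proj k).trace.re = a j := by
  classical
  rw [sum_eq_single j (fun k _ hk => by rw [horth j k (Ne.symm hk)]; simp) (by simp), hidem,
    hrank1, Complex.one_re, mul_one]

lemma sum_mul_re_trace_mul_Dsup_proj (hH : Hᴴ = H)
    (hΔ : ∀ k k', (Δ k k' : ℂ) = (Proj k * Dsup H (Proj k')).trace) (a : ι → ℝ) (j : ι) :
    ∑ k, a k * (Proj k * Dsup H (Proj j)).trace.re = (Δ *ᵥ a) j := by
  have hre : ∀ k, (Proj k * Dsup H (Proj j)).trace.re = Δ k j := fun k => by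
    rw [← hΔ, Complex.ofReal_re]
  rw [← (isSymm_of_eq_trace_mul_Dsup hH hΔ).eq, mulVec_transpose]
  simp only [hre, vecMul, dotProduct]

lemma exists_pos_eventually_le_neg_mul_near_proj [Fintype σ] [Nonempty σ]
    (hidem : ∀ k, Proj k * Proj k = Proj k) (horth : ∀ k k', k ≠ k' → Proj k * Proj k' = 0)
    (hrank1 : ∀ k, (Proj k).trace = 1)
    (hH : Hᴴ = H) (hΔ : ∀ k k', (Δ k k' : ℂ) = (Proj k * Dsup H (Proj k')).trace)
    {α β : σ → ι → ℝ} (hmulvec : ∀ s, Δ *ᵥ α s = -β s) {j : ι} (hβ : ∀ s, 0 < β s j)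
    (hα : ∀ s, 0 < α s j) :
    ∃ ε > 0, ∀ᶠ ρ in 𝓝 (Proj j),
      ∑ s, (∑ k, α s k * (Proj k * Dsup H ρ).trace.re) / √(∑ k, α s k * (ρ * Proj k).trace.re)
        ≤ -ε * ∑ s, √(∑ k, α s k * (ρ * Proj k).trace.re) := by
  have hV : ∀ s, ∑ k, α s k * (Proj j * Proj k).trace.re = α s j := fun s =>
    sum_mul_re_trace_mul_proj hidem horth hrank1 (α s) j
  have hN : ∀ s, ∑ k, α s k * (Proj k * Dsup H (Proj j)).trace.re = -β s j := fun s => by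
    rw [sum_mul_re_trace_mul_Dsup_proj hH hΔ, hmulvec, Pi.neg_apply]
  refine exists_pos_eventually_sum_div_sqrt_le (fun s => ?_) (fun s => ?_) (fun s => ?_) ?_
  · unfold Dsup; fun_prop
  · fun_prop
  · simpa only [hV] using hα s
  · simp only [hV, hN, neg_div, sum_neg_distrib, neg_lt_zero]
    exact sum_pos (fun s _ => div_pos (hβ s) (Real.sqrt_pos.mpr (hα s))) univ_nonempty

end SpectralProjections

theorem stmt14_general {n d : ℕ}
    (Proj : Fin d → Matrix (Fin n) (Fin n) ℂ)
    (hherm : ∀ k, (Proj k)ᴴ = Proj k)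
    (hidem : ∀ k, Proj k * Proj k = Proj k)
    (horth : ∀ k k', k ≠ k' → Proj k * Proj k' = 0)
    (hrank1 : ∀ k, (Proj k).trace = 1)
    (H : Matrix (Fin n) (Fin n) ℂ) (hH : Hᴴ = H)
    (Δ : Matrix (Fin d) (Fin d) ℝ)
    (hΔ : ∀ k k', (Δ k k' : ℂ) = (Proj k * Dsup H (Proj k')).trace)
    (ℓ : Fin d)
    (β α : {s : Fin d // s ≠ ℓ} → Fin d → ℝ)
    (hβpos : ∀ s, ∀ k, k ≠ ℓ → 0 < β s k)
    (hmulvec : ∀ s, Δ.mulVec (α s) = -(β s))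
    (hαpos : ∀ s, ∀ k, k ≠ ℓ → 0 < α s k) :
    ∃ εf > (0 : ℝ), ∃ pbar ∈ Set.Ioo (1 / 2 : ℝ) 1,
      ∀ ρ : Matrix (Fin n) (Fin n) ℂ, ρ.PosSemidef → ρ.trace = 1 →
        (∃ j, j ≠ ℓ ∧ pbar ≤ ((ρ * Proj j).trace).re) →
        (∑ s : {s : Fin d // s ≠ ℓ},
            (∑ k, α s k * ((Proj k * Dsup H ρ).trace).re)
              / Real.sqrt (∑ k, α s k * ((ρ * Proj k).trace).re))
          ≤ -εf * ∑ s : {s : Fin d // s ≠ ℓ},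
              Real.sqrt (∑ k, α s k * ((ρ * Proj k).trace).re) := by
  obtain ⟨εf, hεf, pbar, hpbar, h⟩ := exists_forall_of_eventually_nhdsGT_prod_nhdsLT
    (show (1 / 2 : ℝ) < 1 by norm_num) fun j : {j : Fin d // j ≠ ℓ} => by
      have : Nonempty {s : Fin d // s ≠ ℓ} := ⟨j⟩
      obtain ⟨ε, hε, hnear⟩ := exists_pos_eventually_le_neg_mul_near_proj hidem horth hrank1 hH
        hΔ hmulvec (fun s => hβpos s j j.2) (fun s => hαpos s j j.2)
      exact eventually_le_neg_mul_of_le_re_trace_mul (hherm j) (hidem j) (hrank1 j)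
        (fun ρ => sum_nonneg fun s _ => Real.sqrt_nonneg _) hε hnear
  exact ⟨εf, hεf, pbar, hpbar, fun ρ hρ hρ1 ⟨j, hj, hp⟩ => h ⟨j, hj⟩ ρ hρ hρ1 hp⟩

/-- (Closed-loop essential contribution.) Let `L = Σ_k λ_k Π_k` be the
(nondegenerate) QND measurement operator with distinct eigenvalues and rank-one orthogonal
spectral projections resolving the identity, `H` Hermitian with connected Laplacian graph
`Δ_{k,k'} = tr(Π_k D_H(Π_{k'}))`, and let `α_s` (`s ≠ ℓ`) solve `Δ α_s = −β_s` with
`α_{s,ℓ} = 0`, `α_{s,k} > 0`, where `β_{s,k} > 0` for `k ≠ ℓ` and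
`β_{s,ℓ} = −Σ_{k≠ℓ} β_{s,k}`. Then there exist `ε_f > 0` and `p̄ ∈ (1/2, 1)` such that for
every density matrix `ρ` with `max_{j≠ℓ} tr(ρ Π_j) ≥ p̄` one has
`f_α(ρ) ≤ −ε_f · V_α(ρ)`. -/
theorem stmt14 {n d : ℕ}
    (Proj : Fin d → Matrix (Fin n) (Fin n) ℂ)
    (hherm : ∀ k, (Proj k)ᴴ = Proj k)
    (hidem : ∀ k, Proj k * Proj k = Proj k)
    (horth : ∀ k k', k ≠ k' → Proj k * Proj k' = 0)
    (hres : ∑ k, Proj k = 1)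
    (hrank1 : ∀ k, (Proj k).trace = 1)
    (lam : Fin d → ℝ) (hdist : Function.Injective lam)
    (L : Matrix (Fin n) (Fin n) ℂ) (hL : L = ∑ k, (lam k : ℂ) • Proj k)
    (H : Matrix (Fin n) (Fin n) ℂ) (hH : Hᴴ = H)
    (Δ : Matrix (Fin d) (Fin d) ℝ)
    (hΔ : ∀ k k', (Δ k k' : ℂ) = (Proj k * Dsup H (Proj k')).trace)
    (hconn : (SimpleGraph.fromRel (fun k k' => 0 < Δ k k')).Connected)
    (ℓ : Fin d)
    (β α : {s : Fin d // s ≠ ℓ} → Fin d → ℝ)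
    (hβpos : ∀ s, ∀ k, k ≠ ℓ → 0 < β s k)
    (hβℓ : ∀ s, β s ℓ = -∑ k ∈ Finset.univ.erase ℓ, β s k)
    (hmulvec : ∀ s, Δ.mulVec (α s) = -(β s))
    (hαℓ : ∀ s, α s ℓ = 0)
    (hαpos : ∀ s, ∀ k, k ≠ ℓ → 0 < α s k) :
    ∃ εf > (0 : ℝ), ∃ pbar ∈ Set.Ioo (1 / 2 : ℝ) 1,
      ∀ ρ : Matrix (Fin n) (Fin n) ℂ, ρ.PosSemidef → ρ.trace = 1 →
        (∃ j, j ≠ ℓ ∧ pbar ≤ ((ρ * Proj j).trace).re) →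
        (∑ s : {s : Fin d // s ≠ ℓ},
            (∑ k, α s k * ((Proj k * Dsup H ρ).trace).re)
              / Real.sqrt (∑ k, α s k * ((ρ * Proj k).trace).re))
          ≤ -εf * ∑ s : {s : Fin d // s ≠ ℓ},
              Real.sqrt (∑ k, α s k * ((ρ * Proj k).trace).re) :=
  stmt14_general Proj hherm hidem horth hrank1 H hH Δ hΔ ℓ β α hβpos hmulvec hαpos
end

section
/- Let λ_1,…,λ_d be distinct real numbers and fix ℓ ∈ {1,…,d}. Let (α_{s,k}), indexed by s, k ∈ {1,…,d}∖{ℓ}, be a matrix with all entries positive and of maximal rank d−1. Suppose r ∈ [0,1] and x_k ≥ 0 for k ≠ ℓ with Σ_{k≠ℓ} x_k = 1, and set ϖ = (1−r)λ_ℓ + r·Σ_{k≠ℓ} λ_k x_k. If Σ_{k≠ℓ} α_{s,k}(λ_k − ϖ)x_k = 0 for every s ≠ ℓ, then r = 1 and there exists j ≠ ℓ with x_j = 1 and x_k = 0 for k ∉ {ℓ, j}. -/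
/-! Since `α` has full rank `d − 1`, it is injective, so every `(λ_k − ϖ) x_k` vanishes. As the
`λ_k` are distinct, `x` is then concentrated at a single `j` with `λ_j = ϖ`, and
`λ_j = ϖ = (1 − r) λ_ℓ + r λ_j` together with `λ_ℓ ≠ λ_j` forces `r = 1`. -/

theorem Matrix.mulVec_injective_of_rank_eq_card {m n K : Type*} [Fintype m] [Fintype n] [Field K]
    (A : Matrix m n K) (h : A.rank = Fintype.card n) : Function.Injective A.mulVec := by
  have hker := LinearMap.finrank_range_add_finrank_ker A.mulVecLin
  rw [← Matrix.rank, h, Module.finrank_fintype_fun_eq_card, add_eq_left,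
    Submodule.finrank_eq_zero] at hker
  exact LinearMap.ker_eq_bot.mp hker

theorem exists_eq_one_of_sum_eq_one_of_injective {ι R β : Type*} [Fintype ι] [Semiring R]
    [Nontrivial R] {x : ι → R} {f : ι → β} {c : β} (hf : Function.Injective f)
    (hsum : ∑ k, x k = 1) (hsupp : ∀ k, x k = 0 ∨ f k = c) :
    ∃ j, f j = c ∧ x j = 1 ∧ ∀ k, k ≠ j → x k = 0 := by
  obtain ⟨j, -, hj⟩ : ∃ j ∈ Finset.univ, x j ≠ 0 :=
    Finset.exists_ne_zero_of_sum_ne_zero (hsum ▸ one_ne_zero)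
  have hfj : f j = c := (hsupp j).resolve_left hj
  have hothers : ∀ k, k ≠ j → x k = 0 := fun k hk =>
    (hsupp k).resolve_right fun hfk => hk (hf (hfk.trans hfj.symm))
  refine ⟨j, hfj, ?_, hothers⟩
  rwa [← Fintype.sum_eq_single j hothers]

theorem stmt15_general {d : ℕ} (lam : Fin d → ℝ) (hdist : Function.Injective lam)
    (ℓ : Fin d)
    (α : {s : Fin d // s ≠ ℓ} → {k : Fin d // k ≠ ℓ} → ℝ)
    (hrank : (Matrix.of α).rank = d - 1)
    (r : ℝ)
    (x : {k : Fin d // k ≠ ℓ} → ℝ)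
    (hxsum : ∑ k, x k = 1)
    (hzero : ∀ s : {s : Fin d // s ≠ ℓ},
      ∑ k, α s k * (lam k.1 - ((1 - r) * lam ℓ + r * ∑ k', lam k'.1 * x k')) * x k = 0) :
    r = 1 ∧ ∃ j : {k : Fin d // k ≠ ℓ}, x j = 1 ∧ ∀ k, k ≠ j → x k = 0 := by
  set ϖ := (1 - r) * lam ℓ + r * ∑ k', lam k'.1 * x k'
  have hcard : (Matrix.of α).rank = Fintype.card {k : Fin d // k ≠ ℓ} := by
    simp [hrank, Fintype.card_subtype_compl]
  have hy : (fun k : {k : Fin d // k ≠ ℓ} => (lam k.1 - ϖ) * x k) = 0 :=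
    Matrix.mulVec_injective_of_rank_eq_card _ hcard <| by
      ext s
      simpa [Matrix.mulVec, dotProduct, mul_assoc] using hzero s
  obtain ⟨j, hjϖ, hxj, hothers⟩ := exists_eq_one_of_sum_eq_one_of_injective
    (hdist.comp Subtype.val_injective) (c := ϖ) hxsum fun k => by
      rcases mul_eq_zero.mp (congrFun hy k) with h | h
      · exact .inr (sub_eq_zero.mp h)
      · exact .inl h
  have hmean : ∑ k', lam k'.1 * x k' = lam j.1 := by
    rw [Fintype.sum_eq_single j fun k hk => by rw [hothers k hk, mul_zero], hxj, mul_one]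
  have hr : (1 - r) * (lam ℓ - lam j.1) = 0 := by
    have : ϖ = lam j.1 := hjϖ.symm
    simp only [ϖ, hmean] at this
    linarith
  have hℓj : lam ℓ - lam j.1 ≠ 0 := sub_ne_zero.mpr fun h => j.2 (hdist h).symm
  exact ⟨by linarith [(mul_eq_zero.mp hr).resolve_right hℓj], j, hxj, hothers⟩

/-- Let `λ_1,…,λ_d` be distinct reals, `ℓ` fixed, and `(α_{s,k})`
(`s, k ≠ ℓ`) a matrix with positive entries and maximal rank `d − 1`. Let `r ∈ [0,1]`,
`x_k ≥ 0` with `Σ_{k≠ℓ} x_k = 1`, and `ϖ = (1−r)λ_ℓ + r·Σ_{k≠ℓ} λ_k x_k`. If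
`Σ_{k≠ℓ} α_{s,k}(λ_k − ϖ)x_k = 0` for every `s ≠ ℓ`, then `r = 1` and there is `j ≠ ℓ`
with `x_j = 1` and `x_k = 0` for all other `k`. -/
theorem stmt15 {d : ℕ} (lam : Fin d → ℝ) (hdist : Function.Injective lam)
    (ℓ : Fin d)
    (α : {s : Fin d // s ≠ ℓ} → {k : Fin d // k ≠ ℓ} → ℝ)
    (hαpos : ∀ s k, 0 < α s k)
    (hrank : (Matrix.of α).rank = d - 1)
    (r : ℝ) (hr : r ∈ Set.Icc (0 : ℝ) 1)
    (x : {k : Fin d // k ≠ ℓ} → ℝ)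
    (hx : ∀ k, 0 ≤ x k) (hxsum : ∑ k, x k = 1)
    (hzero : ∀ s : {s : Fin d // s ≠ ℓ},
      ∑ k, α s k * (lam k.1 - ((1 - r) * lam ℓ + r * ∑ k', lam k'.1 * x k')) * x k = 0) :
    r = 1 ∧ ∃ j : {k : Fin d // k ≠ ℓ}, x j = 1 ∧ ∀ k, k ≠ j → x k = 0 :=
  stmt15_general lam hdist ℓ α hrank r x hxsum hzero
end

section
/- Let φ: ℝ → ℝ be infinitely differentiable with φ(x) = 0 for x ≤ 0 and φ(x) = 1 for x ≥ 1, fix ℓ ∈ {1,…,d} and constants 1 > p_max > p_min > 1/2. Then the function F(p) = φ((max_{k≠ℓ} p_k − p_min)/(p_max − p_min)) is infinitely differentiable on the probability simplex D = {p ∈ ℝ^d : p_k ≥ 0 for all k, Σ_k p_k = 1} (i.e., F is ContDiffOn of every order on D), despite the use of a maximum in its definition: at every point of D where the argument of φ is nonnegative, at most one coordinate p_k with k ≠ ℓ exceeds 1/2, so the maximum is locally attained by a single smooth coordinate function. -/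
open Finset

/-- Let `φ : ℝ → ℝ` be infinitely differentiable with `φ = 0` on `(−∞,0]`
and `φ = 1` on `[1,∞)`, and fix `ℓ` and constants `1 > p_max > p_min > 1/2`. Then the
feedback-gain profile `F(p) = φ((max_{k≠ℓ} p_k − p_min)/(p_max − p_min))` is infinitely
differentiable on the probability simplex `{p : p_k ≥ 0, Σ_k p_k = 1}`, despite the `max`
in its definition. -/
theorem stmt18 {d : ℕ} (ℓ : Fin d)
    (φ : ℝ → ℝ) (hφsmooth : ContDiff ℝ (⊤ : ℕ∞) φ)
    (hφ0 : ∀ x ≤ (0 : ℝ), φ x = 0) (hφ1 : ∀ x, (1 : ℝ) ≤ x → φ x = 1)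
    (pmin pmax : ℝ) (h1 : 1 / 2 < pmin) (h2 : pmin < pmax) (h3 : pmax < 1) :
    ContDiffOn ℝ (⊤ : ℕ∞)
      (fun p : Fin d → ℝ =>
        φ (((⨆ k : {k : Fin d // k ≠ ℓ}, p k.1) - pmin) / (pmax - pmin)))
      {p : Fin d → ℝ | (∀ k, 0 ≤ p k) ∧ ∑ k, p k = 1} := by
  have hden : (0 : ℝ) < pmax - pmin := by linarith
  by_cases hK : Nonempty {k : Fin d // k ≠ ℓ}
  · -- nonempty index set
    have hsup : ∀ q : Fin d → ℝ, (⨆ k : {k : Fin d // k ≠ ℓ}, q k.1)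
        = Finset.univ.sup' Finset.univ_nonempty (fun k : {k : Fin d // k ≠ ℓ} => q k.1) :=
      fun q => (Finset.sup'_univ_eq_ciSup _).symm
    intro p hp
    obtain ⟨hnn, hsum⟩ := hp
    set M := ⨆ k : {k : Fin d // k ≠ ℓ}, p k.1 with hM
    by_cases hcase : M < pmin
    · -- locally constant 0
      set U : Set (Fin d → ℝ) := ⋂ k : {k : Fin d // k ≠ ℓ}, {q | q k.1 < pmin} with hU
      have hUopen : IsOpen U :=
        isOpen_iInter_of_finite fun k => isOpen_Iio.preimage (continuous_apply k.1)
      have hpU : p ∈ U := by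
        rw [hU]
        refine Set.mem_iInter.2 fun k => ?_
        have : p k.1 ≤ M := le_ciSup (f := fun k : {k : Fin d // k ≠ ℓ} => p k.1) (Set.Finite.bddAbove (Set.finite_range _)) k
        exact lt_of_le_of_lt this hcase
      have hEq : (fun q : Fin d → ℝ =>
          φ (((⨆ k : {k : Fin d // k ≠ ℓ}, q k.1) - pmin) / (pmax - pmin)))
            =ᶠ[nhds p] fun _ => (0 : ℝ) := by
        filter_upwards [hUopen.mem_nhds hpU] with q hq
        have hqlt : (⨆ k : {k : Fin d // k ≠ ℓ}, q k.1) < pmin := by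
          rw [hsup q]
          exact (Finset.sup'_lt_iff _).2 fun k _ => Set.mem_iInter.1 hq k
        exact hφ0 _ (le_of_lt (div_neg_of_neg_of_pos (by linarith) hden))
      exact ((contDiffAt_const (c := (0:ℝ))).congr_of_eventuallyEq hEq).contDiffWithinAt
    · -- unique strict max
      push_neg at hcase
      obtain ⟨k0, hk0⟩ := exists_eq_ciSup_of_finite
        (f := fun k : {k : Fin d // k ≠ ℓ} => p k.1)
      have hpk0 : pmin ≤ p k0.1 := by rw [hk0]; exact hcase
      have hstrict : ∀ j : {k : Fin d // k ≠ ℓ}, j ≠ k0 → p j.1 < p k0.1 := by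
        intro j hj
        have hne : j.1 ≠ k0.1 := fun h => hj (Subtype.ext h)
        have hsum2 : p j.1 + p k0.1 ≤ 1 := by
          have : ∑ i ∈ ({j.1, k0.1} : Finset (Fin d)), p i ≤ ∑ i, p i :=
            Finset.sum_le_sum_of_subset_of_nonneg (Finset.subset_univ _)
              (fun i _ _ => hnn i)
          rwa [Finset.sum_pair hne, hsum] at this
        linarith
      set V : Set (Fin d → ℝ) :=
        ⋂ j : {k : Fin d // k ≠ ℓ}, ⋂ _ : j ≠ k0, {q | q j.1 < q k0.1} with hV
      have hVopen : IsOpen V := by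
        refine isOpen_iInter_of_finite fun j => isOpen_iInter_of_finite fun _ => ?_
        exact isOpen_lt (continuous_apply j.1) (continuous_apply k0.1)
      have hpV : p ∈ V := by
        rw [hV]
        exact Set.mem_iInter.2 fun j => Set.mem_iInter.2 fun hj => hstrict j hj
      have hG : ContDiff ℝ (⊤ : ℕ∞) fun q : Fin d → ℝ => φ ((q k0.1 - pmin) / (pmax - pmin)) := by
        refine hφsmooth.comp ?_
        exact (((contDiff_pi.mp contDiff_id k0.1).sub contDiff_const).div_const _)
      have hEq : (fun q : Fin d → ℝ =>
          φ (((⨆ k : {k : Fin d // k ≠ ℓ}, q k.1) - pmin) / (pmax - pmin)))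
            =ᶠ[nhds p] fun q => φ ((q k0.1 - pmin) / (pmax - pmin)) := by
        filter_upwards [hVopen.mem_nhds hpV] with q hq
        have hmax : (⨆ k : {k : Fin d // k ≠ ℓ}, q k.1) = q k0.1 := by
          rw [hsup q]
          refine le_antisymm (Finset.sup'_le _ _ fun j _ => ?_)
            (Finset.le_sup' (fun k : {k : Fin d // k ≠ ℓ} => q k.1) (Finset.mem_univ k0))
          by_cases hj : j = k0
          · rw [hj]
          · have := Set.mem_iInter.1 (Set.mem_iInter.1 hq j) hj
            exact le_of_lt this
        rw [hmax]
      exact ((hG.contDiffAt).congr_of_eventuallyEq hEq).contDiffWithinAt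
  · -- empty index set
    have he : IsEmpty {k : Fin d // k ≠ ℓ} := not_nonempty_iff.mp hK
    have : ∀ q : Fin d → ℝ, (⨆ k : {k : Fin d // k ≠ ℓ}, q k.1) = 0 := by
      intro q
      rw [Real.iSup_of_isEmpty]
    simp only [this]
    exact contDiffOn_const
end
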